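/- Let V be a finite ground set, let f : Finset V → ℝ be a submodular function, and let X ⊆ V be such that f is monotone when restricted to subsets of X (i.e., f(A) ≤ f(B) whenever A ⊆ B ⊆ X). Let T, S ⊆ X, let p ∈ [0,1], and let R be a random subset of T (given by any probability distribution μ on Finset V supported on subsets of T) in which every element of T occurs with probability at least p. Then E[f(R ∪ S)] ≥ p·f(T ∪ S) + (1 − p)·f(S). -/

import Mathlib

/-!
Enumerate `T` as `e₁, …, eₖ` and let `wᵢ` be the marginal gain of `eᵢ` over `S ∪ {e₁, …, eᵢ₋₁}`.
The `wᵢ` telescope to `f (T ∪ S) - f S`, they are nonnegative by monotonicity on subsets of `X`,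
and by submodularity `f (R ∪ S) ≥ f S + ∑_{eᵢ ∈ R} wᵢ` for every `R ⊆ T`, since `eᵢ` is added to a
smaller set when building up `R ∪ S`. Taking expectations and using `P(eᵢ ∈ R) ≥ p` gives the bound.
-/

open Finset

section

variable {V : Type*} [DecidableEq V]

def IsSubmodular (f : Finset V → ℝ) : Prop :=
  ∀ A B : Finset V, A ⊆ B → ∀ e ∉ B, f (insert e A) - f A ≥ f (insert e B) - f B

namespace IsSubmodular

variable {f : Finset V → ℝ}

lemma marginal_le (hf : IsSubmodular f) {A B : Finset V} (hAB : A ⊆ B) {e : V}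
    (he : e ∈ A ∨ e ∉ B) : f (insert e B) - f B ≤ f (insert e A) - f A := by
  rcases he with he | he
  · simp [insert_eq_of_mem he, insert_eq_of_mem (hAB he)]
  · exact hf A B hAB e he

lemma exists_weights_le_of_subset (hf : IsSubmodular f) {X : Finset V}
    (hmono : ∀ A B : Finset V, A ⊆ B → B ⊆ X → f A ≤ f B) {S : Finset V} (hS : S ⊆ X)
    {T : Finset V} (hT : T ⊆ X) :
    ∃ w : V → ℝ, (∀ e ∈ T, 0 ≤ w e) ∧ ∑ e ∈ T, w e = f (T ∪ S) - f S ∧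
      ∀ R ⊆ T, f S + ∑ e ∈ R, w e ≤ f (R ∪ S) := by
  induction T using Finset.induction_on with
  | empty => exact ⟨0, by simp, by simp, fun R hR => by simp [subset_empty.mp hR]⟩
  | @insert a T ha ih =>
    obtain ⟨w, hw0, hwsum, hwle⟩ := ih ((subset_insert a T).trans hT)
    set δ := f (insert a T ∪ S) - f (T ∪ S)
    have hδ : 0 ≤ δ := sub_nonneg.mpr <|
      hmono _ _ (union_subset_union (subset_insert a T) subset_rfl) (union_subset hT hS)
    refine ⟨Function.update w a δ, ?_, ?_, ?_⟩
    · intro e he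
      rcases eq_or_ne e a with rfl | hea
      · simpa using hδ
      · simpa [hea] using hw0 e ((mem_insert.mp he).resolve_left hea)
    · rw [sum_insert ha, Function.update_self, sum_update_of_notMem ha, hwsum]
      ring
    · intro R hR
      by_cases haR : a ∈ R
      · have hRT : R.erase a ⊆ T := subset_insert_iff.mp hR
        have hgain := hf.marginal_le (union_subset_union hRT (subset_refl S)) (e := a)
          (by by_cases haS : a ∈ S <;> simp [haS, ha])
        rw [← insert_erase haR, sum_insert (notMem_erase a R), Function.update_self,
          sum_update_of_notMem (notMem_erase a R), insert_union]
        rw [← insert_union] at hgain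
        linarith [hwle _ hRT]
      · rw [sum_update_of_notMem haR]
        exact hwle R ((subset_insert_iff_of_notMem haR).mp hR)

end IsSubmodular

lemma sum_mul_sum_mem_eq_sum_mul_prob [Fintype V] {μ : Finset V → ℝ} {T : Finset V}
    (hsupp : ∀ R : Finset V, ¬ R ⊆ T → μ R = 0) (w : V → ℝ) :
    ∑ R : Finset V, μ R * ∑ e ∈ R, w e =
      ∑ e ∈ T, w e * ∑ R : Finset V, (if e ∈ R then μ R else 0) := by
  have hR : ∀ R : Finset V,
      μ R * ∑ e ∈ R, w e = ∑ e ∈ T, w e * if e ∈ R then μ R else 0 := by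
    intro R
    by_cases hRT : R ⊆ T
    · simp_rw [mul_ite, mul_zero]
      rw [← sum_filter, filter_mem_eq_inter, inter_eq_right.mpr hRT, mul_sum]
      exact sum_congr rfl fun e _ => mul_comm _ _
    · simp [hsupp R hRT]
  simp_rw [hR, mul_sum]
  exact sum_comm

end

theorem stmt4_general {V : Type*} [Fintype V] [DecidableEq V]
    (f : Finset V → ℝ)
    (hsub : ∀ A B : Finset V, A ⊆ B → ∀ e ∉ B,
      f (insert e A) - f A ≥ f (insert e B) - f B)
    (X : Finset V)
    (hmono : ∀ A B : Finset V, A ⊆ B → B ⊆ X → f A ≤ f B)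
    (T S : Finset V) (hT : T ⊆ X) (hS : S ⊆ X)
    (p : ℝ)
    (μ : Finset V → ℝ)
    (hμ0 : ∀ R : Finset V, 0 ≤ μ R)
    (hμ1 : ∑ R : Finset V, μ R = 1)
    (hsupp : ∀ R : Finset V, ¬ R ⊆ T → μ R = 0)
    (hmarg : ∀ e ∈ T, p ≤ ∑ R : Finset V, (if e ∈ R then μ R else 0)) :
    ∑ R : Finset V, μ R * f (R ∪ S) ≥ p * f (T ∪ S) + (1 - p) * f S := by
  obtain ⟨w, hw0, hwsum, hwle⟩ :=
    IsSubmodular.exists_weights_le_of_subset (f := f) hsub hmono hS hT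
  have hpointwise : ∀ R, μ R * (f S + ∑ e ∈ R, w e) ≤ μ R * f (R ∪ S) := fun R => by
    by_cases hRT : R ⊆ T
    · exact mul_le_mul_of_nonneg_left (hwle R hRT) (hμ0 R)
    · simp [hsupp R hRT]
  have hprob : p * ∑ e ∈ T, w e ≤ ∑ e ∈ T, w e * ∑ R, if e ∈ R then μ R else 0 := by
    rw [mul_sum]
    exact sum_le_sum fun e he => by
      rw [mul_comm]; exact mul_le_mul_of_nonneg_left (hmarg e he) (hw0 e he)
  calc p * f (T ∪ S) + (1 - p) * f S = f S * ∑ R, μ R + p * ∑ e ∈ T, w e := by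
        rw [hμ1, hwsum]; ring
    _ ≤ ∑ R, μ R * (f S + ∑ e ∈ R, w e) := by
        rw [sum_congr rfl fun R _ => mul_add (μ R) _ _, sum_add_distrib, ← sum_mul,
          sum_mul_sum_mem_eq_sum_mul_prob hsupp]
        linarith [mul_comm (f S) (∑ R, μ R)]
    _ ≤ ∑ R, μ R * f (R ∪ S) := sum_le_sum fun R _ => hpointwise R

/-- Let `f` be submodular and monotone when restricted to subsets of `X`,
let `T, S ⊆ X`, and let `R` be a random subset of `T` in which every element of `T`
occurs with probability at least `p`.  Then `E[f(R ∪ S)] ≥ p·f(T ∪ S) + (1 - p)·f(S)`. -/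
theorem stmt4 {V : Type*} [Fintype V] [DecidableEq V]
    (f : Finset V → ℝ)
    (hsub : ∀ A B : Finset V, A ⊆ B → ∀ e ∉ B,
      f (insert e A) - f A ≥ f (insert e B) - f B)
    (X : Finset V)
    (hmono : ∀ A B : Finset V, A ⊆ B → B ⊆ X → f A ≤ f B)
    (T S : Finset V) (hT : T ⊆ X) (hS : S ⊆ X)
    (p : ℝ) (hp : p ∈ Set.Icc (0:ℝ) 1)
    (μ : Finset V → ℝ)
    (hμ0 : ∀ R : Finset V, 0 ≤ μ R)
    (hμ1 : ∑ R : Finset V, μ R = 1)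
    (hsupp : ∀ R : Finset V, ¬ R ⊆ T → μ R = 0)
    (hmarg : ∀ e ∈ T, p ≤ ∑ R : Finset V, (if e ∈ R then μ R else 0)) :
    ∑ R : Finset V, μ R * f (R ∪ S) ≥ p * f (T ∪ S) + (1 - p) * f S :=
  stmt4_general f hsub X hmono T S hT hS p μ hμ0 hμ1 hsupp hmarg
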